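/- Cumulative consensus error of normalized iterates (pathwise): let W ∈ ℝ^{n×n} be symmetric with W𝟙 = 𝟙 and ‖W − (1/n)𝟙𝟙ᵀ‖₂ ≤ ρ < 1. Suppose the sequence (X^t)_{t≥0} ⊂ ℝ^{d×n} satisfies X^{t+1} = (X^t − η_t Ẑ^t)W for some η_t ≥ 0 and matrices Ẑ^t ∈ ℝ^{d×n} whose columns each have norm at most 1, with all columns of X^0 equal. Then (i) for every T ≥ 1, ∑_{t=0}^{T-1} (1/n)·‖X^t − X̄^t‖² ≤ ρ̃·∑_{t=0}^{T-1} η_t²; and (ii) if (α_t)_{t≥0} is nonincreasing with values in [0,1], then for every t ≥ 0, ∑_{τ=0}^{t} α_τ·√( (1/n)·‖X^τ − X̄^τ‖² ) ≤ ρ̃·∑_{τ=0}^{t} α_τ·η_τ. -/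

import Mathlib

open Finset

/-- The network constant `ρ̃ := max{ (1 − √((1+ρ)/2))⁻¹·√((1+ρ²)/(1−ρ²)),
(2/(1−ρ))·((1+ρ²)/(1−ρ²)) }`. -/
noncomputable def rhoTilde (ρ : ℝ) : ℝ :=
  max ((1 - Real.sqrt ((1 + ρ) / 2))⁻¹ * Real.sqrt ((1 + ρ ^ 2) / (1 - ρ ^ 2)))
    ((2 / (1 - ρ)) * ((1 + ρ ^ 2) / (1 - ρ ^ 2)))

/-!
Let `e_t` be the root-mean-square distance of the columns of `X^t` from their average. Because
`W𝟙 = 𝟙` and the average is the constant closest to the columns in mean square, one step of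
`X ↦ (X - ηẐ)W` with `‖W - 𝟙𝟙ᵀ/n‖₂ ≤ ρ` gives `e_{t+1} ≤ ρ (e_t + η_t)`, while `e_0 = 0`.
A recursion `u_{t+1} ≤ ρ u_t + v_t` with `u_0 = 0` sums to `(1 - ρ) ∑ u ≤ ∑ v`; this is applied to
`u = α e` (using that `α` is nonincreasing) and, after Young's inequality
`ρ²(a + b)² ≤ ρa² + ρ²/(1 - ρ) b²`, to `u = e²`. The resulting constants `ρ/(1 - ρ)` and
`(ρ/(1 - ρ))²` are both at most `1/(1 - ρ)² ≤ ρ̃`.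
-/

namespace Consensus

variable {E : Type*} {n : ℕ}

section Normed

variable [SeminormedAddCommGroup E]

noncomputable def rms (x : Fin n → E) : ℝ := √((1 / (n : ℝ)) * ∑ i, ‖x i‖ ^ 2)

theorem rms_eq_mul_norm_toLp (x : Fin n → E) :
    rms x = √(1 / (n : ℝ)) * ‖(WithLp.toLp 2 x : PiLp 2 fun _ : Fin n => E)‖ := by
  rw [rms, PiLp.norm_eq_of_L2, Real.sqrt_mul (by positivity)]

theorem rms_sub_le (x y : Fin n → E) : rms (fun i => x i - y i) ≤ rms x + rms y := by
  simp only [rms_eq_mul_norm_toLp, ← mul_add]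
  gcongr
  exact norm_sub_le (WithLp.toLp 2 x) (WithLp.toLp 2 y)

theorem rms_le_of_norm_le {x : Fin n → E} {r : ℝ} (hr : 0 ≤ r) (hx : ∀ i, ‖x i‖ ≤ r) :
    rms x ≤ r := by
  rw [rms, Real.sqrt_le_left hr]
  calc (1 / (n : ℝ)) * ∑ i, ‖x i‖ ^ 2 ≤ (1 / (n : ℝ)) * ∑ _i : Fin n, r ^ 2 := by
        gcongr with i; exact hx i
    _ = (n / n : ℝ) * r ^ 2 := by simp [div_eq_inv_mul, mul_assoc]
    _ ≤ r ^ 2 := mul_le_of_le_one_left (sq_nonneg r) (div_self_le_one _)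

end Normed

section Module

variable [AddCommGroup E] [Module ℝ E]

noncomputable def mean (x : Fin n → E) : E := (n : ℝ)⁻¹ • ∑ j, x j

theorem sum_sub_mean (x : Fin n → E) : ∑ i, (x i - mean x) = 0 := by
  rcases n.eq_zero_or_pos with rfl | hn
  · simp
  · rw [sum_sub_distrib, sum_const, card_univ, Fintype.card_fin, ← Nat.cast_smul_eq_nsmul ℝ,
      mean, smul_inv_smul₀ (by positivity), sub_self]

end Module

section InnerProduct

variable [NormedAddCommGroup E] [InnerProductSpace ℝ E]

theorem sum_norm_sub_mean_sq_le (x : Fin n → E) (c : E) :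
    ∑ i, ‖x i - mean x‖ ^ 2 ≤ ∑ i, ‖x i - c‖ ^ 2 := by
  calc ∑ i, ‖x i - mean x‖ ^ 2
      ≤ ∑ i, ‖x i - mean x‖ ^ 2 + 2 * inner ℝ (∑ i, (x i - mean x)) (mean x - c)
        + ∑ _i : Fin n, ‖mean x - c‖ ^ 2 := by
        rw [sum_sub_mean, inner_zero_left, mul_zero, add_zero]
        exact le_add_of_nonneg_right (by positivity)
    _ = ∑ i, ‖x i - c‖ ^ 2 := by
        rw [sum_inner, mul_sum, ← sum_add_distrib, ← sum_add_distrib]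
        refine sum_congr rfl fun i _ => ?_
        rw [← norm_add_sq_real, sub_add_sub_cancel]

noncomputable def consensusError (x : Fin n → E) : ℝ :=
  rms fun i => x i - mean x

theorem consensusError_le_rms_sub (x : Fin n → E) (c : E) :
    consensusError x ≤ rms fun i => x i - c := by
  unfold consensusError rms
  gcongr √(_ * ?_)
  exact sum_norm_sub_mean_sq_le x c

theorem consensusError_eq_zero_of_forall_eq {x : Fin n → E} (hx : ∀ i j, x i = x j)
    (i₀ : Fin n) : consensusError x = 0 := by
  refine le_antisymm ?_ (Real.sqrt_nonneg _)
  simpa [hx _ i₀, rms] using consensusError_le_rms_sub x (x i₀)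

end InnerProduct

theorem sum_norm_sq_eq_sum_norm_sq_toLp {d : ℕ} (v : Fin n → EuclideanSpace ℝ (Fin d)) :
    ∑ i, ‖v i‖ ^ 2 = ∑ k, ‖(WithLp.toLp 2 fun i => v i k : EuclideanSpace ℝ (Fin n))‖ ^ 2 := by
  simp only [EuclideanSpace.norm_sq_eq]
  exact sum_comm

/-- `‖W - 𝟙𝟙ᵀ/n‖₂ ≤ ρ`, stated on vectors. -/
def IsMixing (W : Matrix (Fin n) (Fin n) ℝ) (ρ : ℝ) : Prop :=
  ∀ a : EuclideanSpace ℝ (Fin n),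
    ‖(WithLp.toLp 2 fun i => (∑ j, W i j * a j) - (∑ j, a j) / n : EuclideanSpace ℝ (Fin n))‖
      ≤ ρ * ‖a‖

variable {d : ℕ} {W : Matrix (Fin n) (Fin n) ℝ} {ρ : ℝ}

theorem sum_norm_mix_sub_mean_sq_le (hW : IsMixing W ρ) (a : Fin n → EuclideanSpace ℝ (Fin d)) :
    ∑ i, ‖∑ j, W i j • a j - mean a‖ ^ 2 ≤ ρ ^ 2 * ∑ j, ‖a j‖ ^ 2 := by
  rw [sum_norm_sq_eq_sum_norm_sq_toLp a, sum_norm_sq_eq_sum_norm_sq_toLp, mul_sum]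
  gcongr with k
  convert pow_le_pow_left₀ (norm_nonneg _) (hW (WithLp.toLp 2 fun j => a j k)) 2 using 2
  · congr 1
    ext i
    simp [mean, div_eq_inv_mul]
  · rw [mul_pow]

theorem rms_mix_sub_mean_le (hW : IsMixing W ρ) (hρ : 0 ≤ ρ)
    (a : Fin n → EuclideanSpace ℝ (Fin d)) :
    rms (fun i => ∑ j, W i j • a j - mean a) ≤ ρ * rms a := by
  rw [rms, rms, ← Real.sqrt_sq hρ, ← Real.sqrt_mul (sq_nonneg ρ), mul_left_comm]
  gcongr
  exact sum_norm_mix_sub_mean_sq_le hW a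

theorem consensusError_mix_le (hWrow : ∀ i, ∑ j, W i j = 1) (hW : IsMixing W ρ) (hρ : 0 ≤ ρ)
    (y : Fin n → EuclideanSpace ℝ (Fin d)) (c : EuclideanSpace ℝ (Fin d)) :
    consensusError (fun i => ∑ j, W i j • y j) ≤ ρ * rms fun j => y j - c := by
  calc consensusError (fun i => ∑ j, W i j • y j)
      ≤ rms fun i => ∑ j, W i j • y j - (c + mean fun j => y j - c) :=
        consensusError_le_rms_sub _ _
    _ = rms fun i => ∑ j, W i j • (y j - c) - mean fun j => y j - c := by
        congr 1
        funext i
        simp only [smul_sub, sum_sub_distrib, ← sum_smul, hWrow, one_smul]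
        abel
    _ ≤ ρ * rms fun j => y j - c := rms_mix_sub_mean_le hW hρ _

theorem consensusError_mix_sub_smul_le (hWrow : ∀ i, ∑ j, W i j = 1) (hW : IsMixing W ρ)
    (hρ : 0 ≤ ρ) {η : ℝ} (hη : 0 ≤ η) (x z : Fin n → EuclideanSpace ℝ (Fin d))
    (hz : ∀ j, ‖z j‖ ≤ 1) :
    consensusError (fun i => ∑ j, W i j • (x j - η • z j)) ≤ ρ * (consensusError x + η) := by
  refine (consensusError_mix_le hWrow hW hρ _ (mean x)).trans ?_
  gcongr
  calc (rms fun j => x j - η • z j - mean x) = rms fun j => (x j - mean x) - η • z j := by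
        simp only [sub_right_comm]
    _ ≤ consensusError x + rms fun j => η • z j := rms_sub_le _ _
    _ ≤ consensusError x + η := by
        gcongr
        refine rms_le_of_norm_le hη fun j => ?_
        rw [norm_smul, Real.norm_of_nonneg hη]
        exact mul_le_of_le_one_right hη (hz j)

end Consensus

section Recurrence

variable {ρ : ℝ}

theorem one_div_one_sub_sq_le_rhoTilde (h₀ : -1 < ρ) (h₁ : ρ < 1) :
    1 / (1 - ρ) ^ 2 ≤ rhoTilde ρ := by
  refine le_max_of_le_right ?_
  have h₁' : 0 < 1 - ρ := by linarith
  have h₂ : 0 < 1 - ρ ^ 2 := by nlinarith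
  rw [div_mul_div_comm, div_le_div_iff₀ (by positivity) (by positivity)]
  nlinarith [sq_nonneg (2 * ρ - 1 / 2)]

theorem div_one_sub_le_rhoTilde (h₀ : -1 < ρ) (h₁ : ρ < 1) : ρ / (1 - ρ) ≤ rhoTilde ρ := by
  refine le_trans ?_ (one_div_one_sub_sq_le_rhoTilde h₀ h₁)
  have h₁' : 0 < 1 - ρ := by linarith
  rw [div_le_div_iff₀ h₁' (by positivity)]
  nlinarith [sq_nonneg (ρ - 1 / 2)]

theorem div_one_sub_sq_le_rhoTilde (h₀ : -1 < ρ) (h₁ : ρ < 1) :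
    (ρ / (1 - ρ)) ^ 2 ≤ rhoTilde ρ := by
  refine le_trans ?_ (one_div_one_sub_sq_le_rhoTilde h₀ h₁)
  rw [div_pow]
  gcongr
  nlinarith

theorem sq_mul_add_le (h₀ : 0 ≤ ρ) (h₁ : ρ < 1) (a b : ℝ) :
    (ρ * (a + b)) ^ 2 ≤ ρ * a ^ 2 + ρ ^ 2 / (1 - ρ) * b ^ 2 := by
  have h₁' : 0 < 1 - ρ := by linarith
  have key : ρ * a ^ 2 + ρ ^ 2 / (1 - ρ) * b ^ 2 - (ρ * (a + b)) ^ 2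
      = ρ / (1 - ρ) * ((1 - ρ) * a - ρ * b) ^ 2 := by
    field_simp
    ring
  rw [← sub_nonneg, key]
  positivity

theorem one_sub_mul_sum_range_le {u v : ℕ → ℝ} (hu₀ : u 0 = 0) (hu : ∀ t, 0 ≤ u t)
    (h : ∀ t, u (t + 1) ≤ ρ * u t + v t) (T : ℕ) :
    (1 - ρ) * ∑ t ∈ range T, u t ≤ ∑ t ∈ range T, v t := by
  have key : ∀ T, (1 - ρ) * ∑ t ∈ range T, u t + u T ≤ ∑ t ∈ range T, v t := by
    intro T
    induction T with
    | zero => simp [hu₀]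
    | succ T ih =>
      rw [sum_range_succ, sum_range_succ]
      linarith [h T]
  linarith [key T, hu T]

variable {e η : ℕ → ℝ}

theorem sum_range_sq_le_of_le_mul_add (h₀ : 0 ≤ ρ) (h₁ : ρ < 1) (he₀ : e 0 = 0)
    (he : ∀ t, 0 ≤ e t) (h : ∀ t, e (t + 1) ≤ ρ * (e t + η t)) (T : ℕ) :
    ∑ t ∈ range T, e t ^ 2 ≤ (ρ / (1 - ρ)) ^ 2 * ∑ t ∈ range T, η t ^ 2 := by
  have h₁' : 0 < 1 - ρ := by linarith
  have hsq : ∀ t, e (t + 1) ^ 2 ≤ ρ * e t ^ 2 + ρ ^ 2 / (1 - ρ) * η t ^ 2 := fun t =>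
    (pow_le_pow_left₀ (he _) (h t) 2).trans (sq_mul_add_le h₀ h₁ _ _)
  have hsum := one_sub_mul_sum_range_le (by simp [he₀]) (fun t => sq_nonneg (e t)) hsq T
  rw [← mul_sum] at hsum
  rw [div_pow, div_mul_eq_mul_div, le_div_iff₀ (by positivity)]
  calc (∑ t ∈ range T, e t ^ 2) * (1 - ρ) ^ 2
      = (1 - ρ) * ((1 - ρ) * ∑ t ∈ range T, e t ^ 2) := by ring
    _ ≤ (1 - ρ) * (ρ ^ 2 / (1 - ρ) * ∑ t ∈ range T, η t ^ 2) := by gcongr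
    _ = ρ ^ 2 * ∑ t ∈ range T, η t ^ 2 := by field_simp

theorem sum_range_mul_le_of_le_mul_add (h₁ : ρ < 1) (he₀ : e 0 = 0) (he : ∀ t, 0 ≤ e t)
    (h : ∀ t, e (t + 1) ≤ ρ * (e t + η t)) {α : ℕ → ℝ} (hα : ∀ t, 0 ≤ α t)
    (hα_anti : ∀ t, α (t + 1) ≤ α t) (T : ℕ) :
    ∑ t ∈ range T, α t * e t ≤ ρ / (1 - ρ) * ∑ t ∈ range T, α t * η t := by
  have hstep : ∀ t, α (t + 1) * e (t + 1) ≤ ρ * (α t * e t) + ρ * (α t * η t) := fun t =>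
    calc α (t + 1) * e (t + 1) ≤ α t * (ρ * (e t + η t)) :=
          mul_le_mul (hα_anti t) (h t) (he _) (hα t)
      _ = ρ * (α t * e t) + ρ * (α t * η t) := by ring
  have hsum :=
    one_sub_mul_sum_range_le (by simp [he₀]) (fun t => mul_nonneg (hα t) (he t)) hstep T
  rw [← mul_sum] at hsum
  rw [div_mul_eq_mul_div, le_div_iff₀ (by linarith)]
  linarith

end Recurrence

theorem cumulative_consensus_error_normalized_general
    (d n : ℕ) (hn : 0 < n)
    (W : Matrix (Fin n) (Fin n) ℝ)
    (hWrow : ∀ i, ∑ j, W i j = 1)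
    (ρ : ℝ) (hρ1 : ρ < 1)
    (hspec : ∀ a : EuclideanSpace ℝ (Fin n),
      ‖(show EuclideanSpace ℝ (Fin n) from
          WithLp.toLp 2 (fun i => (∑ j, W i j * a j) - (∑ j, a j) / n))‖ ≤ ρ * ‖a‖)
    (X Zhat : ℕ → Fin n → EuclideanSpace ℝ (Fin d)) (ηt : ℕ → ℝ)
    (hη : ∀ t, 0 ≤ ηt t) (hZhat : ∀ t i, ‖Zhat t i‖ ≤ 1)
    (hX : ∀ t i, X (t + 1) i = ∑ j, W i j • (X t j - ηt t • Zhat t j))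
    (hX0 : ∀ i j, X 0 i = X 0 j) :
    (∀ T : ℕ, 1 ≤ T →
      ∑ t ∈ Finset.range T, (1 / (n : ℝ)) * ∑ i, ‖X t i - (n : ℝ)⁻¹ • ∑ j, X t j‖ ^ 2
        ≤ rhoTilde ρ * ∑ t ∈ Finset.range T, ηt t ^ 2)
    ∧ (∀ αt : ℕ → ℝ, (∀ t, 0 ≤ αt t) → (∀ t, αt t ≤ 1) → (∀ t, αt (t + 1) ≤ αt t) →
        ∀ t : ℕ,
        ∑ τ ∈ Finset.range (t + 1), αt τ *
            Real.sqrt ((1 / (n : ℝ)) * ∑ i, ‖X τ i - (n : ℝ)⁻¹ • ∑ j, X τ j‖ ^ 2)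
          ≤ rhoTilde ρ * ∑ τ ∈ Finset.range (t + 1), αt τ * ηt τ) := by
  have hρ0 : 0 ≤ ρ := by
    have h := hspec (EuclideanSpace.single ⟨0, hn⟩ 1)
    rw [PiLp.norm_single, norm_one, mul_one] at h
    exact (norm_nonneg _).trans h
  set e : ℕ → ℝ := fun t => Consensus.consensusError (X t) with he
  have he₀ : e 0 = 0 := Consensus.consensusError_eq_zero_of_forall_eq hX0 ⟨0, hn⟩
  have he_nonneg : ∀ t, 0 ≤ e t := fun t => Real.sqrt_nonneg _
  have hstep : ∀ t, e (t + 1) ≤ ρ * (e t + ηt t) := fun t => by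
    simpa only [he, funext (hX t)] using
      Consensus.consensusError_mix_sub_smul_le hWrow hspec hρ0 (hη t) (X t) (Zhat t) (hZhat t)
  refine ⟨fun T _ => ?_, fun α hα₀ _ hα_anti t => ?_⟩
  · calc _ = ∑ t ∈ range T, e t ^ 2 :=
          sum_congr rfl fun t _ => (Real.sq_sqrt (by positivity)).symm
      _ ≤ (ρ / (1 - ρ)) ^ 2 * ∑ t ∈ range T, ηt t ^ 2 :=
          sum_range_sq_le_of_le_mul_add hρ0 hρ1 he₀ he_nonneg hstep T
      _ ≤ _ := by gcongr; exact div_one_sub_sq_le_rhoTilde (by linarith) hρ1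
  · calc _ ≤ ρ / (1 - ρ) * ∑ τ ∈ range (t + 1), α τ * ηt τ :=
          sum_range_mul_le_of_le_mul_add hρ1 he₀ he_nonneg hstep hα₀ hα_anti (t + 1)
      _ ≤ _ := mul_le_mul_of_nonneg_right (div_one_sub_le_rhoTilde (by linarith) hρ1)
          (sum_nonneg fun τ _ => mul_nonneg (hα₀ τ) (hη τ))

/-- **Cumulative consensus error of normalized iterates (pathwise).** For iterates
`X^{t+1} = (X^t − η_t Ẑ^t)W` with unit-norm-bounded columns of `Ẑ^t` and all columns
of `X⁰` equal: (i) `∑_{t<T} (1/n)‖X^t − X̄^t‖² ≤ ρ̃ ∑_{t<T} η_t²`; (ii) for any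
nonincreasing `α_t ∈ [0,1]` and every `t`,
`∑_{τ≤t} α_τ √((1/n)‖X^τ − X̄^τ‖²) ≤ ρ̃ ∑_{τ≤t} α_τ η_τ`. -/
theorem cumulative_consensus_error_normalized
    (d n : ℕ) (hn : 0 < n)
    (W : Matrix (Fin n) (Fin n) ℝ) (hWsymm : W.IsSymm)
    (hWrow : ∀ i, ∑ j, W i j = 1)
    (ρ : ℝ) (hρ1 : ρ < 1)
    (hspec : ∀ a : EuclideanSpace ℝ (Fin n),
      ‖(show EuclideanSpace ℝ (Fin n) from
          WithLp.toLp 2 (fun i => (∑ j, W i j * a j) - (∑ j, a j) / n))‖ ≤ ρ * ‖a‖)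
    (X Zhat : ℕ → Fin n → EuclideanSpace ℝ (Fin d)) (ηt : ℕ → ℝ)
    (hη : ∀ t, 0 ≤ ηt t) (hZhat : ∀ t i, ‖Zhat t i‖ ≤ 1)
    (hX : ∀ t i, X (t + 1) i = ∑ j, W i j • (X t j - ηt t • Zhat t j))
    (hX0 : ∀ i j, X 0 i = X 0 j) :
    (∀ T : ℕ, 1 ≤ T →
      ∑ t ∈ Finset.range T, (1 / (n : ℝ)) * ∑ i, ‖X t i - (n : ℝ)⁻¹ • ∑ j, X t j‖ ^ 2
        ≤ rhoTilde ρ * ∑ t ∈ Finset.range T, ηt t ^ 2)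
    ∧ (∀ αt : ℕ → ℝ, (∀ t, 0 ≤ αt t) → (∀ t, αt t ≤ 1) → (∀ t, αt (t + 1) ≤ αt t) →
        ∀ t : ℕ,
        ∑ τ ∈ Finset.range (t + 1), αt τ *
            Real.sqrt ((1 / (n : ℝ)) * ∑ i, ‖X τ i - (n : ℝ)⁻¹ • ∑ j, X τ j‖ ^ 2)
          ≤ rhoTilde ρ * ∑ τ ∈ Finset.range (t + 1), αt τ * ηt τ) :=
  cumulative_consensus_error_normalized_general d n hn W hWrow ρ hρ1 hspec X Zhat ηt hη hZhat hX hX0
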